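/- Let X, Θ, Y be separable real Hilbert spaces, U = X × Θ with norm ‖(x,θ)‖_U² = ‖x‖_X² + ‖θ‖_Θ², F : U → Y Lipschitz with constant L, E : U → Y Lipschitz with constant at most R with ‖E(0)‖_Y ≤ B, and h(u) = ‖F(u) − E(u)‖_Y². Let ν, ν' be Borel probability measures on U with finite second moments m_ν = ∫‖u‖_U² dν and m_{ν'} = ∫‖u‖_U² dν', and let γ be any coupling of ν and ν' (a Borel probability measure on U × U with marginals ν and ν'). Then with C₁ = L + R and C₂ = ‖F(0)‖_Y + B, |∫ h dν' − ∫ h dν| ≤ (C₁² √(2(m_ν + m_{ν'})) + 2C₁C₂) · (∫ ‖u − v‖_U² dγ(u,v))^{1/2}. -/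

import Mathlib

open MeasureTheory
open scoped ENNReal NNReal

noncomputable section

/-- The Hilbert norm on the product `U = X × Θ`: `‖(x, θ)‖_U = √(‖x‖² + ‖θ‖²)`. -/
def nU {X Θ : Type*} [NormedAddCommGroup X] [NormedAddCommGroup Θ] (u : X × Θ) : ℝ :=
  Real.sqrt (‖u.1‖ ^ 2 + ‖u.2‖ ^ 2)

/-- The 2-Wasserstein distance associated with a cost function `d`: the infimum over all
couplings `γ` of `μ` and `μ'` (i.e. probability measures on the product whose marginals are
`μ` and `μ'`) of `(∫ d(u,v)² dγ)^{1/2}`. -/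
def W2 {α : Type*} [MeasurableSpace α] (d : α → α → ℝ) (μ μ' : Measure α) : ℝ :=
  sInf { r : ℝ | ∃ γ : Measure (α × α), IsProbabilityMeasure γ ∧
      γ.map Prod.fst = μ ∧ γ.map Prod.snd = μ' ∧
      r = Real.sqrt (∫ p, d p.1 p.2 ^ 2 ∂γ) }

/-- The squared-error risk `R_ν(E) = ∫ ‖F(u) - E(u)‖² dν(u)`. -/
def risk {X Θ Y : Type*} [NormedAddCommGroup X] [NormedAddCommGroup Θ] [NormedAddCommGroup Y]
    [MeasurableSpace X] [MeasurableSpace Θ] (F E : X × Θ → Y) (ν : Measure (X × Θ)) : ℝ :=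
  ∫ u, ‖F u - E u‖ ^ 2 ∂ν

/-- The hypothesis class `H`: all maps `E : U → Y` that are Lipschitz with constant at most
`R₀` (with respect to the Hilbert product norm on `U`) and satisfy `‖E 0‖ ≤ B`. -/
def Hclass {X Θ Y : Type*} [NormedAddCommGroup X] [NormedAddCommGroup Θ] [NormedAddCommGroup Y]
    (R₀ B : ℝ) : Set (X × Θ → Y) :=
  { E | (∀ u v, ‖E u - E v‖ ≤ R₀ * nU (u - v)) ∧ ‖E 0‖ ≤ B }

/-- The constant `c(ν,ν') = C₁² √(2(∫‖u‖_U² dν + ∫‖u‖_U² dν')) + 2 C₁ C₂`, where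
`C₁ = L + R₀` and `C₂ = ‖F 0‖ + B`. -/
def cShift {X Θ Y : Type*} [NormedAddCommGroup X] [NormedAddCommGroup Θ] [NormedAddCommGroup Y]
    [MeasurableSpace X] [MeasurableSpace Θ] (L R₀ B : ℝ) (F : X × Θ → Y)
    (ν ν' : Measure (X × Θ)) : ℝ :=
  (L + R₀) ^ 2 * Real.sqrt (2 * ((∫ u, nU u ^ 2 ∂ν) + ∫ u, nU u ^ 2 ∂ν'))
    + 2 * (L + R₀) * (‖F 0‖ + B)

/-- The bound objective `J(ν) = inf_{E ∈ H} R_ν(E) + c(ν, ν_dep) W₂(ν, ν_dep)`, where the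
Wasserstein distance on `U = X × Θ` is taken with respect to the Hilbert product norm. -/
def Jobj {X Θ Y : Type*} [NormedAddCommGroup X] [NormedAddCommGroup Θ] [NormedAddCommGroup Y]
    [MeasurableSpace X] [MeasurableSpace Θ] (L R₀ B : ℝ) (F : X × Θ → Y)
    (νdep ν : Measure (X × Θ)) : ℝ :=
  sInf ((fun E => risk F E ν) '' Hclass R₀ B)
    + cShift L R₀ B F ν νdep * W2 (fun u v => nU (u - v)) ν νdep

/-! `G = F - E` is `C₁`-Lipschitz for `nU` with `‖G 0‖ ≤ C₂`, so the factorisation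
`‖a‖² - ‖b‖² = (‖a‖ - ‖b‖)(‖a‖ + ‖b‖)` gives the pointwise bound
`|h v - h u| ≤ (C₁² (nU u + nU v) + 2 C₁ C₂) nU (u - v)`. Integrate it against the coupling and
apply Cauchy–Schwarz to both terms; the second moments of the marginals bound
`∫ (nU u + nU v)² dγ` by `2 (m_ν + m_ν')`. -/

theorem abs_norm_sq_sub_norm_sq_le {E : Type*} [SeminormedAddCommGroup E] (a b : E) :
    |‖a‖ ^ 2 - ‖b‖ ^ 2| ≤ ‖a - b‖ * (‖a‖ + ‖b‖) := by
  rw [sq_sub_sq, abs_mul, abs_of_nonneg (by positivity), mul_comm]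
  exact mul_le_mul_of_nonneg_right (abs_norm_sub_norm_le a b) (by positivity)

theorem integral_mul_le_sqrt_integral_sq_mul_sqrt_integral_sq {α : Type*} [MeasurableSpace α]
    {μ : Measure α} {f g : α → ℝ} (hf₀ : 0 ≤ f) (hg₀ : 0 ≤ g) (hf : MemLp f 2 μ)
    (hg : MemLp g 2 μ) :
    ∫ a, f a * g a ∂μ ≤ √(∫ a, f a ^ 2 ∂μ) * √(∫ a, g a ^ 2 ∂μ) := by
  simpa [Real.sqrt_eq_rpow] using
    integral_mul_le_Lp_mul_Lq_of_nonneg Real.HolderConjugate.two_two (ae_of_all _ hf₀)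
      (ae_of_all _ hg₀) (by simpa using hf) (by simpa using hg)

section Coupling

variable {β : Type*} [MeasurableSpace β] {γ : Measure (β × β)}

theorem memLp_comp_fst_add_comp_snd {w : β → ℝ} {p : ℝ≥0∞}
    (hw₁ : MemLp w p (γ.map Prod.fst)) (hw₂ : MemLp w p (γ.map Prod.snd)) :
    MemLp (fun q => w q.1 + w q.2) p γ :=
  ((memLp_map_measure_iff hw₁.1 measurable_fst.aemeasurable).1 hw₁).add
    ((memLp_map_measure_iff hw₂.1 measurable_snd.aemeasurable).1 hw₂)

theorem integral_sq_comp_fst_add_comp_snd_le {w : β → ℝ} (hw₁ : MemLp w 2 (γ.map Prod.fst))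
    (hw₂ : MemLp w 2 (γ.map Prod.snd)) :
    ∫ q, (w q.1 + w q.2) ^ 2 ∂γ
      ≤ 2 * (∫ x, w x ^ 2 ∂γ.map Prod.fst + ∫ x, w x ^ 2 ∂γ.map Prod.snd) := by
  have h₁ : Integrable (fun q => w q.1 ^ 2) γ :=
    hw₁.integrable_sq.comp_measurable measurable_fst
  have h₂ : Integrable (fun q => w q.2 ^ 2) γ :=
    hw₂.integrable_sq.comp_measurable measurable_snd
  calc ∫ q, (w q.1 + w q.2) ^ 2 ∂γ ≤ ∫ q, 2 * w q.1 ^ 2 + 2 * w q.2 ^ 2 ∂γ :=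
        integral_mono (memLp_comp_fst_add_comp_snd hw₁ hw₂).integrable_sq
          ((h₁.const_mul 2).add (h₂.const_mul 2))
          fun q => by nlinarith [sq_nonneg (w q.1 - w q.2)]
    _ = 2 * (∫ q, w q.1 ^ 2 ∂γ + ∫ q, w q.2 ^ 2 ∂γ) := by
        rw [integral_add (h₁.const_mul 2) (h₂.const_mul 2), integral_const_mul,
          integral_const_mul, mul_add]
    _ = _ := by
        rw [integral_map measurable_fst.aemeasurable hw₁.integrable_sq.1,
          integral_map measurable_snd.aemeasurable hw₂.integrable_sq.1]

theorem abs_integral_map_snd_sub_integral_map_fst_le {g : β → ℝ} {k : β × β → ℝ}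
    (hg₁ : Integrable g (γ.map Prod.fst)) (hg₂ : Integrable g (γ.map Prod.snd))
    (hk : Integrable k γ) (hgk : ∀ q, |g q.2 - g q.1| ≤ k q) :
    |∫ x, g x ∂γ.map Prod.snd - ∫ x, g x ∂γ.map Prod.fst| ≤ ∫ q, k q ∂γ := by
  have h₁ : Integrable (fun q => g q.1) γ := hg₁.comp_measurable measurable_fst
  have h₂ : Integrable (fun q => g q.2) γ := hg₂.comp_measurable measurable_snd
  rw [integral_map measurable_snd.aemeasurable hg₂.1,
    integral_map measurable_fst.aemeasurable hg₁.1, ← integral_sub h₂ h₁]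
  exact abs_integral_le_integral_abs.trans (integral_mono (h₂.sub h₁).abs hk hgk)

theorem abs_integral_sub_le_of_coupling {ν ν' : Measure β} [IsProbabilityMeasure γ]
    (hfst : γ.map Prod.fst = ν) (hsnd : γ.map Prod.snd = ν') {g w : β → ℝ} {c : β × β → ℝ}
    {A B : ℝ} (hA : 0 ≤ A) (hB : 0 ≤ B) (hg : Integrable g ν) (hg' : Integrable g ν')
    (hw₀ : 0 ≤ w) (hw : MemLp w 2 ν) (hw' : MemLp w 2 ν') (hc₀ : 0 ≤ c) (hc : MemLp c 2 γ)
    (hgc : ∀ q : β × β, |g q.2 - g q.1| ≤ (A * (w q.1 + w q.2) + B) * c q) :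
    |∫ x, g x ∂ν' - ∫ x, g x ∂ν|
      ≤ (A * √(2 * (∫ x, w x ^ 2 ∂ν + ∫ x, w x ^ 2 ∂ν')) + B) * √(∫ q, c q ^ 2 ∂γ) := by
  subst hfst hsnd
  set W : β × β → ℝ := fun q => w q.1 + w q.2
  have hW : MemLp W 2 γ := memLp_comp_fst_add_comp_snd hw hw'
  have hWc : ∫ q, W q * c q ∂γ
      ≤ √(2 * (∫ x, w x ^ 2 ∂γ.map Prod.fst + ∫ x, w x ^ 2 ∂γ.map Prod.snd))
        * √(∫ q, c q ^ 2 ∂γ) :=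
    (integral_mul_le_sqrt_integral_sq_mul_sqrt_integral_sq
      (fun q => add_nonneg (hw₀ _) (hw₀ _)) hc₀ hW hc).trans
      (by gcongr; exact integral_sq_comp_fst_add_comp_snd_le hw hw')
  have hc_le : ∫ q, c q ∂γ ≤ √(∫ q, c q ^ 2 ∂γ) := by
    simpa using integral_mul_le_sqrt_integral_sq_mul_sqrt_integral_sq zero_le_one hc₀
      (memLp_const 1) hc
  calc |∫ x, g x ∂γ.map Prod.snd - ∫ x, g x ∂γ.map Prod.fst|
      ≤ ∫ q, (A * W q + B) * c q ∂γ :=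
        abs_integral_map_snd_sub_integral_map_fst_le hg hg'
          (((hW.const_mul A).add (memLp_const B)).integrable_mul hc) hgc
    _ = A * ∫ q, W q * c q ∂γ + B * ∫ q, c q ∂γ := by
        have hWc_int : Integrable (fun q => W q * c q) γ := hW.integrable_mul hc
        simp_rw [add_mul, mul_assoc]
        rw [integral_add (hWc_int.const_mul A) ((hc.integrable one_le_two).const_mul B),
          integral_const_mul, integral_const_mul]
    _ ≤ _ := by rw [add_mul, mul_assoc]; gcongr

end Coupling

section ProductNorm

variable {X Θ Y : Type*} [NormedAddCommGroup X] [NormedAddCommGroup Θ] [NormedAddCommGroup Y]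

theorem nU_eq_norm_toLp (u : X × Θ) : nU u = ‖WithLp.toLp 2 u‖ :=
  (WithLp.prod_norm_eq_of_L2 _).symm

theorem nU_nonneg (u : X × Θ) : 0 ≤ nU u := Real.sqrt_nonneg _

theorem nU_sub_comm (u v : X × Θ) : nU (u - v) = nU (v - u) := by
  simp only [nU_eq_norm_toLp, WithLp.toLp_sub, norm_sub_rev]

theorem nU_sub_le (u v : X × Θ) : nU (u - v) ≤ nU u + nU v := by
  simpa only [nU_eq_norm_toLp, WithLp.toLp_sub] using norm_sub_le _ _

theorem continuous_nU : Continuous (nU : X × Θ → ℝ) :=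
  (continuous_norm.comp (WithLp.prod_continuous_toLp 2 X Θ)).congr fun u =>
    (nU_eq_norm_toLp u).symm

variable {G : X × Θ → Y} {K : ℝ}

theorem continuous_of_norm_sub_le_mul_nU (hG : ∀ u v, ‖G u - G v‖ ≤ K * nU (u - v)) :
    Continuous G := by
  have hLip : LipschitzWith K.toNNReal (G ∘ WithLp.ofLp (p := 2)) :=
    LipschitzWith.of_dist_le' fun a b => by
      have := hG a.ofLp b.ofLp
      rwa [nU_eq_norm_toLp, WithLp.toLp_sub, WithLp.toLp_ofLp, WithLp.toLp_ofLp,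
        ← dist_eq_norm, ← dist_eq_norm] at this
  exact hLip.continuous.comp (WithLp.prod_continuous_toLp 2 X Θ)

theorem nonneg_of_norm_sub_le_mul_nU [Nontrivial (X × Θ)]
    (hG : ∀ u v, ‖G u - G v‖ ≤ K * nU (u - v)) : 0 ≤ K := by
  obtain ⟨u, v, huv⟩ := exists_pair_ne (X × Θ)
  have hpos : 0 < nU (u - v) := by
    rw [nU_eq_norm_toLp, WithLp.toLp_sub]
    exact norm_pos_iff.2 (sub_ne_zero.2 ((WithLp.toLp_injective 2).ne huv))
  exact nonneg_of_mul_nonneg_left ((norm_nonneg _).trans (hG u v)) hpos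

theorem norm_le_of_norm_sub_le_mul_nU {M : ℝ} (hG : ∀ u v, ‖G u - G v‖ ≤ K * nU (u - v))
    (hG₀ : ‖G 0‖ ≤ M) (u : X × Θ) : ‖G u‖ ≤ K * nU u + M := by
  have := hG u 0
  rw [sub_zero] at this
  linarith [norm_le_norm_add_norm_sub' (G u) (G 0)]

theorem abs_norm_sq_sub_norm_sq_le_of_norm_sub_le_mul_nU {M : ℝ}
    (hG : ∀ u v, ‖G u - G v‖ ≤ K * nU (u - v)) (hG₀ : ‖G 0‖ ≤ M) (u v : X × Θ) :
    |‖G v‖ ^ 2 - ‖G u‖ ^ 2| ≤ (K ^ 2 * (nU u + nU v) + 2 * K * M) * nU (u - v) := by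
  have hdiff : ‖G v - G u‖ ≤ K * nU (u - v) := nU_sub_comm u v ▸ hG v u
  have hsum : ‖G v‖ + ‖G u‖ ≤ K * (nU u + nU v) + 2 * M := by
    linarith [norm_le_of_norm_sub_le_mul_nU hG hG₀ u, norm_le_of_norm_sub_le_mul_nU hG hG₀ v]
  calc |‖G v‖ ^ 2 - ‖G u‖ ^ 2| ≤ ‖G v - G u‖ * (‖G v‖ + ‖G u‖) :=
        abs_norm_sq_sub_norm_sq_le _ _
    _ ≤ K * nU (u - v) * (K * (nU u + nU v) + 2 * M) :=
        mul_le_mul hdiff hsum (by positivity) ((norm_nonneg _).trans hdiff)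
    _ = _ := by ring

theorem integrable_norm_sq_of_norm_sub_le_mul_nU [MeasurableSpace X] [MeasurableSpace Θ]
    [OpensMeasurableSpace (X × Θ)] [SecondCountableTopologyEither (X × Θ) Y]
    {ν : Measure (X × Θ)} [IsFiniteMeasure ν] (hG : ∀ u v, ‖G u - G v‖ ≤ K * nU (u - v))
    (hν : MemLp nU 2 ν) : Integrable (fun u => ‖G u‖ ^ 2) ν := by
  have hGm := (continuous_of_norm_sub_le_mul_nU hG).aestronglyMeasurable (μ := ν)
  refine (memLp_two_iff_integrable_sq_norm hGm).1
    (((hν.const_mul K).add (memLp_const ‖G 0‖)).of_le hGm (ae_of_all _ fun u => ?_))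
  exact (norm_le_of_norm_sub_le_mul_nU hG le_rfl u).trans (le_abs_self _)

end ProductNorm

variable {X Θ Y : Type*}
  [NormedAddCommGroup X] [InnerProductSpace ℝ X] [CompleteSpace X]
  [SecondCountableTopology X] [MeasurableSpace X] [BorelSpace X]
  [NormedAddCommGroup Θ] [InnerProductSpace ℝ Θ] [CompleteSpace Θ]
  [SecondCountableTopology Θ] [MeasurableSpace Θ] [BorelSpace Θ]
  [NormedAddCommGroup Y] [InnerProductSpace ℝ Y] [CompleteSpace Y]
  [SecondCountableTopology Y]

/-- For any coupling `γ` of `ν` and `ν'`, the shift of the expected squared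
error is controlled by `c(ν,ν')` times the square root of the transport cost of `γ`. -/
theorem expected_sqErr_shift_coupling (F E : X × Θ → Y) (L R B : ℝ)
    (hF : ∀ u v : X × Θ, ‖F u - F v‖ ≤ L * nU (u - v))
    (hE : ∀ u v : X × Θ, ‖E u - E v‖ ≤ R * nU (u - v))
    (hE0 : ‖E 0‖ ≤ B)
    (h : X × Θ → ℝ) (hh : ∀ u, h u = ‖F u - E u‖ ^ 2)
    (ν ν' : Measure (X × Θ)) [IsProbabilityMeasure ν] [IsProbabilityMeasure ν']
    (hν : Integrable (fun u => nU u ^ 2) ν) (hν' : Integrable (fun u => nU u ^ 2) ν')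
    (γ : Measure ((X × Θ) × (X × Θ))) [IsProbabilityMeasure γ]
    (hfst : γ.map Prod.fst = ν) (hsnd : γ.map Prod.snd = ν') :
    |(∫ u, h u ∂ν') - ∫ u, h u ∂ν|
      ≤ ((L + R) ^ 2 * Real.sqrt (2 * ((∫ u, nU u ^ 2 ∂ν) + ∫ u, nU u ^ 2 ∂ν'))
            + 2 * (L + R) * (‖F 0‖ + B))
        * Real.sqrt (∫ p, nU (p.1 - p.2) ^ 2 ∂γ) := by
  obtain rfl : h = fun u => ‖F u - E u‖ ^ 2 := funext hh
  rcases subsingleton_or_nontrivial (X × Θ) with hU | hU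
  · -- here `L + R` may be negative, but both sides vanish
    simp [Subsingleton.elim _ (0 : X × Θ), nU]
  have hG : ∀ u v, ‖(F - E) u - (F - E) v‖ ≤ (L + R) * nU (u - v) := fun u v => by
    rw [Pi.sub_apply, Pi.sub_apply, sub_sub_sub_comm, add_mul]
    exact (norm_sub_le _ _).trans (add_le_add (hF u v) (hE u v))
  have hG₀ : ‖(F - E) 0‖ ≤ ‖F 0‖ + B := (norm_sub_le _ _).trans (by gcongr)
  have hC₁ : 0 ≤ L + R := nonneg_of_norm_sub_le_mul_nU hG
  have hC₂ : 0 ≤ ‖F 0‖ + B := (norm_nonneg _).trans hG₀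
  have hw : MemLp nU 2 ν := (memLp_two_iff_integrable_sq continuous_nU.aestronglyMeasurable).2 hν
  have hw' : MemLp nU 2 ν' :=
    (memLp_two_iff_integrable_sq continuous_nU.aestronglyMeasurable).2 hν'
  have hc : MemLp (fun p => nU (p.1 - p.2)) 2 γ :=
    (memLp_comp_fst_add_comp_snd (hfst ▸ hw) (hsnd ▸ hw')).of_le
      (continuous_nU.comp (continuous_fst.sub continuous_snd)).aestronglyMeasurable
      (ae_of_all _ fun p => by
        simpa [abs_of_nonneg (nU_nonneg _),
          abs_of_nonneg (add_nonneg (nU_nonneg p.1) (nU_nonneg p.2))] using nU_sub_le p.1 p.2)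
  exact abs_integral_sub_le_of_coupling hfst hsnd (sq_nonneg _) (by positivity)
    (integrable_norm_sq_of_norm_sub_le_mul_nU hG hw)
    (integrable_norm_sq_of_norm_sub_le_mul_nU hG hw')
    nU_nonneg hw hw' (fun p => nU_nonneg _) hc
    fun p => abs_norm_sq_sub_norm_sq_le_of_norm_sub_le_mul_nU hG hG₀ p.1 p.2
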